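/- Let F = {f₁,…,f_k} be an IFS of similarities on ℝ^d satisfying the open set condition, all with the same similarity factor c ∈ (0,1), and attractor K. Then the box-counting dimension of K exists and equals −log k / log c. -/

import Mathlib

open Metric Set Filter Topology MeasureTheory ENNReal NNReal

noncomputable section

/-- A map is a similarity with factor `c` if it scales all distances exactly by `c`. -/
def IsSimilarity {X : Type*} [MetricSpace X] (f : X → X) (c : ℝ) : Prop :=
  ∀ x y, dist (f x) (f y) = c * dist x y

/-- Composition `f_{ω₁} ∘ ⋯ ∘ f_{ω_n}` of the maps of an IFS along a word `ω`. -/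
def wordComp {X : Type*} {k : ℕ} (f : Fin k → X → X) {n : ℕ} (ω : Fin n → Fin k) : X → X :=
  (List.ofFn fun i => f (ω i)).foldr (· ∘ ·) id

/-- Number of elements of level `Γ_n` of the natural fractal structure (counted with
multiplicity over words) that meet `K`. -/
def levelCount {X : Type*} [MetricSpace X] {k : ℕ} (f : Fin k → X → X) (K : Set X)
    (n : ℕ) : ℕ :=
  Set.ncard {ω : Fin n → Fin k | ((wordComp f ω '' K) ∩ K).Nonempty}

/-- `δ(K, Γ_n)`: supremum of diameters of the elements of level `Γ_n` meeting `K`. -/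
def deltaLevel {X : Type*} [MetricSpace X] {k : ℕ} (f : Fin k → X → X) (K : Set X)
    (n : ℕ) : ℝ :=
  sSup {d : ℝ | ∃ ω : Fin n → Fin k, ((wordComp f ω '' K) ∩ K).Nonempty ∧
    d = Metric.diam (wordComp f ω '' K)}

/-- `N_δ(K)`: the largest number of disjoint closed balls of radius `δ` with centres in `K`. -/
def packingNum {X : Type*} [MetricSpace X] (K : Set X) (δ : ℝ) : ℕ :=
  sSup {m : ℕ | ∃ t : Finset X, t.card = m ∧ ↑t ⊆ K ∧
    (t : Set X).Pairwise fun x y => Disjoint (Metric.closedBall x δ) (Metric.closedBall y δ)}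

/-- The pre-measure `H^s_{n,3}(K)`: infimum over whole levels `m ≥ n` of the sum of the
`s`-th powers of the diameters of all elements of that level (with multiplicity). -/
def H3pre {X : Type*} [MetricSpace X] {k : ℕ} (f : Fin k → X → X) (K : Set X)
    (s : ℝ) (n : ℕ) : ℝ≥0∞ :=
  ⨅ m : {m : ℕ // n ≤ m}, ∑ ω : Fin m.1 → Fin k,
    ENNReal.ofReal (Metric.diam (wordComp f ω '' K)) ^ s

/-- `H^s_3(K)`: the (monotone) limit of `H^s_{n,3}(K)` as `n → ∞`. -/
def H3 {X : Type*} [MetricSpace X] {k : ℕ} (f : Fin k → X → X) (K : Set X) (s : ℝ) : ℝ≥0∞ :=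
  ⨆ n : ℕ, H3pre f K s n

/-- `H^s_4(K)`: limit over `n` of the infimum over finite covers of `K` by elements of
levels `≥ n` of the natural fractal structure. -/
def H4 {X : Type*} [MetricSpace X] {k : ℕ} (f : Fin k → X → X) (K : Set X) (s : ℝ) : ℝ≥0∞ :=
  ⨆ n : ℕ, ⨅ (𝒜 : Set (Set X)) (_ : 𝒜.Finite ∧
      (∀ A ∈ 𝒜, ∃ m, n ≤ m ∧ ∃ ω : Fin m → Fin k, A = wordComp f ω '' K) ∧ K ⊆ ⋃₀ 𝒜),
    ∑' A : 𝒜, ENNReal.ofReal (Metric.diam (A : Set X)) ^ s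

/-- `H^s_5(K)`: limit over `n` of the infimum over countable covers of `K` by elements of
levels `≥ n` of the natural fractal structure. -/
def H5 {X : Type*} [MetricSpace X] {k : ℕ} (f : Fin k → X → X) (K : Set X) (s : ℝ) : ℝ≥0∞ :=
  ⨆ n : ℕ, ⨅ (𝒜 : Set (Set X)) (_ : 𝒜.Countable ∧
      (∀ A ∈ 𝒜, ∃ m, n ≤ m ∧ ∃ ω : Fin m → Fin k, A = wordComp f ω '' K) ∧ K ⊆ ⋃₀ 𝒜),
    ∑' A : 𝒜, ENNReal.ofReal (Metric.diam (A : Set X)) ^ s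

/-- `H^s_6(K)`: limit as `δ → 0` of the infimum over countable covers of `K` by
fractal-structure elements of diameter at most `δ`. -/
def H6 {X : Type*} [MetricSpace X] {k : ℕ} (f : Fin k → X → X) (K : Set X) (s : ℝ) : ℝ≥0∞ :=
  ⨆ (δ : ℝ) (_ : 0 < δ), ⨅ (𝒜 : Set (Set X)) (_ : 𝒜.Countable ∧
      (∀ A ∈ 𝒜, (∃ m, ∃ ω : Fin m → Fin k, A = wordComp f ω '' K) ∧ Metric.diam A ≤ δ) ∧
      K ⊆ ⋃₀ 𝒜),
    ∑' A : 𝒜, ENNReal.ofReal (Metric.diam (A : Set X)) ^ s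

/-- The open set condition for a family of self-maps of `ℝ^d`. -/
def OSC {d k : ℕ} (f : Fin k → EuclideanSpace ℝ (Fin d) → EuclideanSpace ℝ (Fin d)) : Prop :=
  ∃ V : Set (EuclideanSpace ℝ (Fin d)), V.Nonempty ∧ IsOpen V ∧ Bornology.IsBounded V ∧
    (∀ i, f i '' V ⊆ V) ∧ Pairwise fun i j => Disjoint (f i '' V) (f j '' V)

/-!
Put `s = -log k / log c`, so that `k = c ^ (-s)`, and for `δ ≤ 1` choose `n` with
`c ^ (n + 1) < δ ≤ c ^ n`. Fix `m` with `c ^ m diam K ≤ 2c`: the `k ^ (n + m)` images of `K`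
under words of length `n + m` cover `K` and have diameter at most `2δ`, so each contains at most
one centre of a `δ`-packing, and `N_δ(K) ≤ k ^ (n + m) ≤ k ^ m δ ^ (-s)`.
Conversely, the doubled balls of a maximal packing cover `K`, so for a fixed `y ∈ K` and each
word `ω` of length `n` the point `f_ω(y)` is `2δ`-close to some centre `x`. By the open set
condition the images `f_ω(B)` of a ball `B ⊆ V` are disjoint; those attached to `x` lie in a ball
of radius `≍ δ` around `x` and each has volume `≳ δ ^ d`, so boundedly many words are attached to
each centre, and `δ ^ (-s) ≍ k ^ n ≲ N_δ(K)`. The bounds `N_δ(K) ≍ δ ^ (-s)` give the limit.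
-/

section Words

variable {X : Type*} {k : ℕ} (f : Fin k → X → X)

theorem wordComp_zero (ω : Fin 0 → Fin k) : wordComp f ω = id := rfl

theorem wordComp_succ {n : ℕ} (ω : Fin (n + 1) → Fin k) :
    wordComp f ω = f (ω 0) ∘ wordComp f (Fin.tail ω) := by
  rw [wordComp, List.ofFn_succ]
  rfl

theorem wordComp_image_subset {V : Set X} (hV : ∀ i, f i '' V ⊆ V) :
    ∀ {n : ℕ} (ω : Fin n → Fin k), wordComp f ω '' V ⊆ V
  | 0, ω => by rw [wordComp_zero, image_id]
  | n + 1, ω => by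
    rw [wordComp_succ, image_comp]
    exact (image_mono (wordComp_image_subset hV (Fin.tail ω))).trans (hV (ω 0))

theorem pairwise_disjoint_wordComp_image (hinj : ∀ i, Function.Injective (f i)) {V : Set X}
    (hV : ∀ i, f i '' V ⊆ V) (hdisj : Pairwise fun i j => Disjoint (f i '' V) (f j '' V)) :
    ∀ {n : ℕ}, Pairwise fun ω ω' : Fin n → Fin k =>
      Disjoint (wordComp f ω '' V) (wordComp f ω' '' V)
  | 0, ω, ω', h => absurd (Subsingleton.elim ω ω') h
  | n + 1, ω, ω', h => by
    simp only [wordComp_succ, image_comp]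
    by_cases h0 : ω 0 = ω' 0
    · have htail : Fin.tail ω ≠ Fin.tail ω' := fun ht =>
        h (by rw [← Fin.cons_self_tail ω, ← Fin.cons_self_tail ω', h0, ht])
      rw [h0]
      exact disjoint_image_of_injective (hinj (ω' 0))
        (pairwise_disjoint_wordComp_image hinj hV hdisj htail)
    · exact (hdisj h0).mono (image_mono (wordComp_image_subset f hV _))
        (image_mono (wordComp_image_subset f hV _))

theorem iUnion_wordComp_image {K : Set X} (hK : K = ⋃ i, f i '' K) :
    ∀ n : ℕ, ⋃ ω : Fin n → Fin k, wordComp f ω '' K = K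
  | 0 => by simp only [wordComp_zero, image_id, iUnion_const]
  | n + 1 => by
    have hcons : Function.Surjective fun p : Fin k × (Fin n → Fin k) =>
        (Fin.cons p.1 p.2 : Fin (n + 1) → Fin k) :=
      fun ω => ⟨(ω 0, Fin.tail ω), Fin.cons_self_tail ω⟩
    rw [← hcons.iUnion_comp, iUnion_prod']
    simp only [wordComp_succ, Fin.cons_zero, Fin.tail_cons, image_comp, ← image_iUnion,
      iUnion_wordComp_image hK n]
    exact hK.symm

theorem wordComp_image_subset_of_eq_iUnion {K : Set X} (hK : K = ⋃ i, f i '' K) {n : ℕ}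
    (ω : Fin n → Fin k) : wordComp f ω '' K ⊆ K :=
  (subset_iUnion (fun ω : Fin n → Fin k => wordComp f ω '' K) ω).trans
    (iUnion_wordComp_image f hK n).le

end Words

section Similarity

variable {X : Type*} [MetricSpace X] {g h : X → X} {r r' : ℝ}

theorem IsSimilarity.comp (hg : IsSimilarity g r) (hh : IsSimilarity h r') :
    IsSimilarity (g ∘ h) (r * r') :=
  fun x y => by rw [Function.comp_apply, Function.comp_apply, hg, hh, mul_assoc]

theorem IsSimilarity.lipschitzWith (hg : IsSimilarity g r) : LipschitzWith r.toNNReal g :=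
  LipschitzWith.of_dist_le_mul fun x y => by
    rw [hg x y, Real.coe_toNNReal']
    exact mul_le_mul_of_nonneg_right (le_max_left r 0) dist_nonneg

theorem IsSimilarity.antilipschitzWith (hr : 0 < r) (hg : IsSimilarity g r) :
    AntilipschitzWith r⁻¹.toNNReal g :=
  AntilipschitzWith.of_le_mul_dist fun x y => by
    rw [hg x y, Real.coe_toNNReal' r⁻¹, max_eq_left (inv_nonneg.2 hr.le), ← mul_assoc,
      inv_mul_cancel₀ hr.ne', one_mul]

theorem isSimilarity_wordComp {k : ℕ} {f : Fin k → X → X} {c : ℝ}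
    (hf : ∀ i, IsSimilarity (f i) c) : ∀ {n : ℕ} (ω : Fin n → Fin k),
      IsSimilarity (wordComp f ω) (c ^ n)
  | 0, ω => fun x y => by rw [wordComp_zero, pow_zero, one_mul, id, id]
  | n + 1, ω => by
    rw [wordComp_succ, pow_succ']
    exact (hf (ω 0)).comp (isSimilarity_wordComp hf (Fin.tail ω))

end Similarity

section Measure

open Module

theorem card_mul_le_measure_of_pairwiseDisjoint {α ι : Type*} [MeasurableSpace α]
    (μ : Measure α) {F : Finset ι} {W : ι → Set α} {B : Set α} {a : ℝ≥0∞}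
    (hmeas : ∀ i ∈ F, MeasurableSet (W i)) (hdisj : (F : Set ι).PairwiseDisjoint W)
    (hsub : ∀ i ∈ F, W i ⊆ B) (ha : ∀ i ∈ F, a ≤ μ (W i)) :
    F.card * a ≤ μ B :=
  calc (F.card : ℝ≥0∞) * a = F.card • a := (nsmul_eq_mul _ _).symm
    _ ≤ ∑ i ∈ F, μ (W i) := Finset.card_nsmul_le_sum F _ _ ha
    _ = μ (⋃ i ∈ F, W i) := (measure_biUnion_finset hdisj hmeas).symm
    _ ≤ μ B := measure_mono (iUnion₂_subset hsub)

variable {E : Type*} [NormedAddCommGroup E] [NormedSpace ℝ E] [FiniteDimensional ℝ E]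
  [MeasurableSpace E] [BorelSpace E]

theorem card_mul_pow_le_of_pairwiseDisjoint (μ : Measure E) [μ.IsAddHaarMeasure] {ι : Type*}
    {F : Finset ι} {W : ι → Set E} (hmeas : ∀ i ∈ F, MeasurableSet (W i))
    (hdisj : (F : Set ι).PairwiseDisjoint W) {x : E} {a b : ℝ} (ha : 0 ≤ a) (hb : 0 ≤ b)
    (hW : ∀ i ∈ F, μ (closedBall 0 a) ≤ μ (W i)) (hsub : ∀ i ∈ F, W i ⊆ closedBall x b) :
    F.card * a ^ finrank ℝ E ≤ b ^ finrank ℝ E := by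
  have h := card_mul_le_measure_of_pairwiseDisjoint μ hmeas hdisj hsub hW
  rw [Measure.addHaar_closedBall μ _ ha, Measure.addHaar_closedBall μ _ hb, ← mul_assoc,
    ENNReal.mul_le_mul_iff_left (measure_ball_pos μ 0 one_pos).ne' measure_ball_lt_top.ne,
    ← ENNReal.ofReal_natCast, ← ENNReal.ofReal_mul (Nat.cast_nonneg _)] at h
  exact (ENNReal.ofReal_le_ofReal_iff (by positivity)).1 h

theorem IsSimilarity.hausdorffMeasure_closedBall_le_image {g : E → E} {r : ℝ} (hr : 0 < r)
    (hg : IsSimilarity g r) (x y : E) {ρ : ℝ} (hρ : 0 ≤ ρ) :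
    μH[finrank ℝ E] (closedBall y (r * ρ)) ≤ μH[finrank ℝ E] (g '' closedBall x ρ) := by
  have hinv : ENNReal.ofReal (r ^ finrank ℝ E) * ENNReal.ofReal r⁻¹ ^ (finrank ℝ E : ℝ) = 1 := by
    rw [ENNReal.rpow_natCast, ← ENNReal.ofReal_pow (inv_nonneg.2 hr.le),
      ← ENNReal.ofReal_mul (by positivity), ← mul_pow, mul_inv_cancel₀ hr.ne', one_pow,
      ENNReal.ofReal_one]
  calc μH[finrank ℝ E] (closedBall y (r * ρ))
      = ENNReal.ofReal (r ^ finrank ℝ E) * μH[finrank ℝ E] (closedBall x ρ) := by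
        rw [Measure.addHaar_closedBall _ _ (by positivity), Measure.addHaar_closedBall _ _ hρ,
          mul_pow, ENNReal.ofReal_mul (by positivity), mul_assoc]
    _ ≤ ENNReal.ofReal (r ^ finrank ℝ E) *
        (ENNReal.ofReal r⁻¹ ^ (finrank ℝ E : ℝ) * μH[finrank ℝ E] (g '' closedBall x ρ)) :=
        by gcongr; exact (hg.antilipschitzWith hr).le_hausdorffMeasure_image (Nat.cast_nonneg _) _
    _ = μH[finrank ℝ E] (g '' closedBall x ρ) := by rw [← mul_assoc, hinv, one_mul]

end Measure

section Packing

def IsPacking {X : Type*} [MetricSpace X] (K : Set X) (δ : ℝ) (t : Finset X) : Prop :=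
  ↑t ⊆ K ∧ (t : Set X).Pairwise fun x y => Disjoint (closedBall x δ) (closedBall y δ)

variable {X : Type*} [MetricSpace X] {K : Set X} {δ : ℝ} {t : Finset X}

theorem packingNum_le_of_forall_card_le {N : ℕ} (hN : ∀ t, IsPacking K δ t → t.card ≤ N) :
    packingNum K δ ≤ N :=
  csSup_le' fun _ ⟨t, htm, ht⟩ => htm ▸ hN t ht

theorem IsPacking.card_le_packingNum {N : ℕ} (hN : ∀ t, IsPacking K δ t → t.card ≤ N)
    (ht : IsPacking K δ t) : t.card ≤ packingNum K δ :=
  le_csSup ⟨N, fun _ ⟨t, htm, ht⟩ => htm ▸ hN t ht⟩ ⟨t, rfl, ht⟩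

theorem exists_isPacking_card_eq_packingNum {N : ℕ} (hN : ∀ t, IsPacking K δ t → t.card ≤ N) :
    ∃ t, IsPacking K δ t ∧ t.card = packingNum K δ := by
  obtain ⟨t, htm, ht⟩ := Nat.sSup_mem (s := {m : ℕ | ∃ t : Finset X, t.card = m ∧
    IsPacking K δ t}) ⟨0, ∅, rfl, by simp [IsPacking]⟩ ⟨N, fun _ ⟨t, htm, ht⟩ => htm ▸ hN t ht⟩
  exact ⟨t, ht, htm⟩

theorem IsPacking.subset_iUnion_closedBall (hδ : 0 ≤ δ) (ht : IsPacking K δ t)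
    (hmax : ∀ t', IsPacking K δ t' → t'.card ≤ t.card) :
    K ⊆ ⋃ x ∈ t, closedBall x (2 * δ) := by
  classical
  intro y hy
  by_contra hyt
  simp only [mem_iUnion, mem_closedBall, not_exists, not_le] at hyt
  have hy_notMem : y ∉ t := fun hyt' => by
    have := hyt y hyt'
    rw [dist_self] at this
    linarith
  have hinsert : IsPacking K δ (insert y t) := by
    refine ⟨by simpa [insert_subset_iff] using ⟨hy, ht.1⟩, ?_⟩
    rw [Finset.coe_insert, pairwise_insert]
    refine ⟨ht.2, fun x hx _ => ?_⟩
    have hdisj := closedBall_disjoint_closedBall (δ := δ) (ε := δ) (by linarith [hyt x hx])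
    exact ⟨hdisj, hdisj.symm⟩
  have := hmax _ hinsert
  rw [Finset.card_insert_of_notMem hy_notMem] at this
  omega

end Packing

section NormedPacking

variable {E : Type*} [NormedAddCommGroup E] [NormedSpace ℝ E] {K : Set E} {δ : ℝ}

theorem IsPacking.card_le_of_cover {t : Finset E} (hδ : 0 ≤ δ) (ht : IsPacking K δ t)
    {ι : Type*} {s : Finset ι} {C : ι → Set E} (hcover : K ⊆ ⋃ i ∈ s, C i)
    (hC : ∀ i ∈ s, ∀ x ∈ C i, ∀ y ∈ C i, dist x y ≤ 2 * δ) : t.card ≤ s.card := by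
  refine Finset.card_le_card_of_forall_subsingleton (fun x i => x ∈ C i) (fun x hx => ?_)
    fun i hi x ⟨hxt, hxC⟩ y ⟨hyt, hyC⟩ => ?_
  · simpa using hcover (ht.1 hx)
  · by_contra hxy
    have := (disjoint_closedBall_closedBall_iff hδ hδ).1 (ht.2 hxt hyt hxy)
    linarith [hC i hi x hxC y hyC]

theorem IsCompact.exists_forall_isPacking_card_le (hK : IsCompact K) (hδ : 0 < δ) :
    ∃ N : ℕ, ∀ t, IsPacking K δ t → t.card ≤ N := by
  obtain ⟨s, -, hs⟩ := hK.elim_nhds_subcover (fun x => ball x δ) fun x _ => ball_mem_nhds x hδ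
  refine ⟨s.card, fun t ht => ht.card_le_of_cover hδ.le hs fun x _ y hy z hz => ?_⟩
  linarith [dist_triangle_right y z x, mem_ball.1 hy, mem_ball.1 hz]

end NormedPacking

section SelfSimilar

open Module

variable {E : Type*} [NormedAddCommGroup E] [NormedSpace ℝ E] {k : ℕ} {f : Fin k → E → E}
  {c : ℝ} {K : Set E}

theorem packingNum_le_pow (hc : 0 ≤ c) (hf : ∀ i, IsSimilarity (f i) c)
    (hK : K = ⋃ i, f i '' K) (hKb : Bornology.IsBounded K) {δ : ℝ} (hδ : 0 ≤ δ) {n : ℕ}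
    (hn : c ^ n * diam K ≤ 2 * δ) : packingNum K δ ≤ k ^ n := by
  refine packingNum_le_of_forall_card_le fun t ht => ?_
  have hcover : K ⊆ ⋃ ω ∈ (Finset.univ : Finset (Fin n → Fin k)), wordComp f ω '' K := by
    simpa using (iUnion_wordComp_image f hK n).ge
  calc t.card ≤ (Finset.univ : Finset (Fin n → Fin k)).card := ht.card_le_of_cover hδ hcover ?_
    _ = k ^ n := by simp
  rintro ω - _ ⟨a, ha, rfl⟩ _ ⟨b, hb, rfl⟩
  rw [isSimilarity_wordComp hf ω a b]
  exact (mul_le_mul_of_nonneg_left (dist_le_diam_of_mem hKb ha hb) (pow_nonneg hc n)).trans hn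

variable [FiniteDimensional ℝ E] [MeasurableSpace E] [BorelSpace E]

theorem card_le_of_forall_dist_wordComp_le (hc : 0 < c) (hf : ∀ i, IsSimilarity (f i) c)
    {V : Set E} (hVmap : ∀ i, f i '' V ⊆ V)
    (hVdisj : Pairwise fun i j => Disjoint (f i '' V) (f j '' V)) {v y : E} {ρ M : ℝ}
    (hρ : 0 < ρ) (hvV : closedBall v ρ ⊆ V) (hM : V ⊆ closedBall y M) {n : ℕ} {δ : ℝ}
    (hδ : 0 < δ) (hδn : δ ≤ c ^ n) (hnδ : c ^ (n + 1) ≤ δ) {x : E}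
    {F : Finset (Fin n → Fin k)} (hF : ∀ ω ∈ F, dist (wordComp f ω y) x ≤ 2 * δ) :
    (F.card : ℝ) ≤ ((M / c + 2) / ρ) ^ finrank ℝ E := by
  have hsim := isSimilarity_wordComp hf (n := n)
  have hinj : ∀ i, Function.Injective (f i) := fun i => ((hf i).antilipschitzWith hc).injective
  have hM0 : 0 ≤ M := dist_nonneg.trans (mem_closedBall.1 (hM (hvV (mem_closedBall_self hρ.le))))
  set W := fun ω : Fin n → Fin k => wordComp f ω '' closedBall v ρ
  have hmeas : ∀ ω ∈ F, MeasurableSet (W ω) := fun ω _ =>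
    ((isCompact_closedBall v ρ).image (hsim ω).lipschitzWith.continuous).measurableSet
  have hdisj : (F : Set (Fin n → Fin k)).PairwiseDisjoint W := fun ω _ ω' _ h =>
    (pairwise_disjoint_wordComp_image f hinj hVmap hVdisj h).mono (image_mono hvV)
      (image_mono hvV)
  -- `μH[finrank ℝ E]` is an additive Haar measure whose behaviour under the (a priori
  -- non-affine) similarities `wordComp f ω` follows from their antilipschitz bound.
  have hW : ∀ ω ∈ F, μH[finrank ℝ E] (closedBall (0 : E) (δ * ρ)) ≤ μH[finrank ℝ E] (W ω) :=
    fun ω _ => (measure_mono (closedBall_subset_closedBall (by gcongr))).trans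
      ((hsim ω).hausdorffMeasure_closedBall_le_image (pow_pos hc n) v 0 hρ.le)
  have hsub : ∀ ω ∈ F, W ω ⊆ closedBall x (δ * (M / c + 2)) := by
    rintro ω hω _ ⟨u, hu, rfl⟩
    have hcn : c ^ n ≤ δ / c := by rwa [le_div_iff₀ hc, ← pow_succ]
    calc dist (wordComp f ω u) x
        ≤ dist (wordComp f ω u) (wordComp f ω y) + dist (wordComp f ω y) x := dist_triangle _ _ _
      _ ≤ δ / c * M + 2 * δ := by
        rw [hsim ω u y]
        gcongr
        · exact mem_closedBall.1 (hM (hvV hu))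
        · exact hF ω hω
      _ = δ * (M / c + 2) := by ring
  have hcount := card_mul_pow_le_of_pairwiseDisjoint μH[finrank ℝ E] hmeas hdisj
    (by positivity) (by positivity) hW hsub
  rw [mul_pow, mul_pow, mul_left_comm] at hcount
  rw [div_pow, le_div_iff₀ (by positivity)]
  exact le_of_mul_le_mul_left hcount (by positivity)

theorem pow_le_packingNum_mul (hc : 0 < c) (hf : ∀ i, IsSimilarity (f i) c) {V : Set E}
    (hVmap : ∀ i, f i '' V ⊆ V) (hVdisj : Pairwise fun i j => Disjoint (f i '' V) (f j '' V))
    {v y : E} {ρ M : ℝ} (hρ : 0 < ρ) (hvV : closedBall v ρ ⊆ V) (hM : V ⊆ closedBall y M)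
    (hy : y ∈ K) (hcpt : IsCompact K) (hK : K = ⋃ i, f i '' K) {n : ℕ} {δ : ℝ} (hδ : 0 < δ)
    (hδn : δ ≤ c ^ n) (hnδ : c ^ (n + 1) ≤ δ) :
    (k : ℝ) ^ n ≤ packingNum K δ * ((M / c + 2) / ρ) ^ finrank ℝ E := by
  classical
  obtain ⟨N, hN⟩ := hcpt.exists_forall_isPacking_card_le hδ
  obtain ⟨t, ht, htcard⟩ := exists_isPacking_card_eq_packingNum hN
  have hcover := ht.subset_iUnion_closedBall hδ.le fun t' ht' =>
    htcard ▸ ht'.card_le_packingNum hN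
  have hnear : ∀ ω : Fin n → Fin k, ∃ x ∈ t, dist (wordComp f ω y) x ≤ 2 * δ := fun ω => by
    simpa using hcover (wordComp_image_subset_of_eq_iUnion f hK ω (mem_image_of_mem _ hy))
  choose Φ hΦt hΦ using hnear
  calc (k : ℝ) ^ n = ∑ x ∈ t, ((Finset.univ.filter fun ω => Φ ω = x).card : ℝ) := by
        rw_mod_cast [← Finset.card_eq_sum_card_fiberwise fun ω _ => hΦt ω]
        simp
    _ ≤ ∑ _x ∈ t, ((M / c + 2) / ρ) ^ finrank ℝ E :=
        Finset.sum_le_sum fun x _ => card_le_of_forall_dist_wordComp_le hc hf hVmap hVdisj hρ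
          hvV hM hδ hδn hnδ fun ω hω => (Finset.mem_filter.1 hω).2 ▸ hΦ ω
    _ = packingNum K δ * ((M / c + 2) / ρ) ^ finrank ℝ E := by
        rw [Finset.sum_const, nsmul_eq_mul, htcard]

end SelfSimilar

theorem packingNum_rpow_bounds {E : Type*} [NormedAddCommGroup E] [NormedSpace ℝ E]
    [FiniteDimensional ℝ E] [MeasurableSpace E] [BorelSpace E] {k : ℕ} {f : Fin k → E → E}
    {c : ℝ} (hc : c ∈ Ioo (0 : ℝ) 1) (hf : ∀ i, IsSimilarity (f i) c) {V : Set E}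
    (hVne : V.Nonempty) (hVo : IsOpen V) (hVb : Bornology.IsBounded V)
    (hVmap : ∀ i, f i '' V ⊆ V) (hVdisj : Pairwise fun i j => Disjoint (f i '' V) (f j '' V))
    {K : Set E} (hne : K.Nonempty) (hcpt : IsCompact K) (hK : K = ⋃ i, f i '' K) {s : ℝ}
    (hs : c ^ (-s) = k) (hs0 : 0 ≤ s) :
    ∃ C₁ C₂ : ℝ, 0 < C₁ ∧ 0 < C₂ ∧ ∀ δ ∈ Ioc (0 : ℝ) 1,
      C₁ * δ ^ (-s) ≤ packingNum K δ ∧ (packingNum K δ : ℝ) ≤ C₂ * δ ^ (-s) := by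
  obtain ⟨hc0, hc1⟩ := hc
  obtain ⟨y, hy⟩ := hne
  obtain ⟨v, hv⟩ := hVne
  obtain ⟨ρ, hρ, hvV⟩ := nhds_basis_closedBall.mem_iff.1 (hVo.mem_nhds hv)
  obtain ⟨M, hM0, hM⟩ := hVb.subset_closedBall_lt 0 y
  obtain ⟨m, hm⟩ := exists_pow_lt_of_lt_one (x := 2 * c / (diam K + 1)) (by positivity) hc1
  have hk : (0 : ℝ) < k := hs ▸ Real.rpow_pos_of_pos hc0 _
  have hkn : ∀ n : ℕ, (k : ℝ) ^ n = (c ^ n) ^ (-s) := fun n => by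
    rw [← hs, ← Real.rpow_mul_natCast hc0.le, mul_comm, Real.rpow_natCast_mul hc0.le]
  have hcm : c ^ m * diam K ≤ 2 * c := by
    rw [lt_div_iff₀ (by positivity)] at hm
    nlinarith [pow_pos hc0 m]
  set C := ((M / c + 2) / ρ) ^ Module.finrank ℝ E
  have hC : 0 < C := by positivity
  refine ⟨(k * C)⁻¹, k ^ m, by positivity, by positivity, fun δ ⟨hδ0, hδ1⟩ => ?_⟩
  obtain ⟨n, hnδ, hδn⟩ := exists_nat_pow_near_of_lt_one hδ0 hδ1 hc0 hc1
  constructor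
  · have hlow := pow_le_packingNum_mul hc0 hf hVmap hVdisj hρ hvV hM hy hcpt hK hδ0 hδn hnδ.le
    calc (k * C)⁻¹ * δ ^ (-s) ≤ (k * C)⁻¹ * (k : ℝ) ^ (n + 1) := by
          rw [hkn]
          exact mul_le_mul_of_nonneg_left
            (Real.rpow_le_rpow_of_nonpos (pow_pos hc0 _) hnδ.le (neg_nonpos.2 hs0)) (by positivity)
      _ = k ^ n / C := by field_simp; ring
      _ ≤ packingNum K δ := by rwa [div_le_iff₀ hC]
  · have hn : c ^ (n + m) * diam K ≤ 2 * δ :=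
      calc c ^ (n + m) * diam K = c ^ n * (c ^ m * diam K) := by ring
        _ ≤ c ^ n * (2 * c) := by gcongr
        _ = 2 * c ^ (n + 1) := by ring
        _ ≤ 2 * δ := by linarith
    calc (packingNum K δ : ℝ) ≤ (k : ℝ) ^ (n + m) := by
          exact_mod_cast packingNum_le_pow hc0.le hf hK hcpt.isBounded hδ0.le hn
      _ = k ^ m * (c ^ n) ^ (-s) := by rw [pow_add, hkn, mul_comm]
      _ ≤ k ^ m * δ ^ (-s) := mul_le_mul_of_nonneg_left
          (Real.rpow_le_rpow_of_nonpos hδ0 hδn (neg_nonpos.2 hs0)) (by positivity)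

theorem tendsto_log_div_neg_log_of_rpow_bounds {N : ℝ → ℝ} {s C₁ C₂ : ℝ} (hC₁ : 0 < C₁)
    (hC₂ : 0 < C₂) (hN : ∀ᶠ δ in 𝓝[>] 0, C₁ * δ ^ (-s) ≤ N δ ∧ N δ ≤ C₂ * δ ^ (-s)) :
    Tendsto (fun δ => Real.log (N δ) / -Real.log δ) (𝓝[>] 0) (𝓝 s) := by
  have hL : Tendsto (fun δ : ℝ => -Real.log δ) (𝓝[>] 0) atTop :=
    tendsto_neg_atBot_atTop.comp Real.tendsto_log_nhdsGT_zero
  have hlim : ∀ C : ℝ, Tendsto (fun δ => s + Real.log C / -Real.log δ) (𝓝[>] 0) (𝓝 s) :=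
    fun C => by simpa using (tendsto_const_nhds.div_atTop hL).const_add s
  have hlog_bound : ∀ C : ℝ, 0 < C → ∀ᶠ δ in 𝓝[>] (0 : ℝ),
      s + Real.log C / -Real.log δ = Real.log (C * δ ^ (-s)) / -Real.log δ := fun C hC => by
    filter_upwards [self_mem_nhdsWithin, hL.eventually_gt_atTop 0] with δ hδ hLδ
    have hlogδ : Real.log δ ≠ 0 := (neg_pos.1 hLδ).ne
    rw [Real.log_mul hC.ne' (Real.rpow_pos_of_pos hδ _).ne', Real.log_rpow hδ]
    field_simp
    ring
  refine tendsto_of_tendsto_of_tendsto_of_le_of_le' (hlim C₁) (hlim C₂) ?_ ?_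
  · filter_upwards [hN, hlog_bound C₁ hC₁, self_mem_nhdsWithin, hL.eventually_gt_atTop 0]
      with δ hδN heq (hδ : 0 < δ) hLδ
    rw [heq]
    gcongr
    exact hδN.1
  · filter_upwards [hN, hlog_bound C₂ hC₂, self_mem_nhdsWithin, hL.eventually_gt_atTop 0]
      with δ hδN heq (hδ : 0 < δ) hLδ
    rw [heq]
    have : 0 < N δ := lt_of_lt_of_le (by positivity) hδN.1
    gcongr
    exact hδN.2

/-- under the OSC and a common factor `c`, the box-counting dimension of the
attractor exists and equals `-log k / log c`. -/
theorem box_dim_common_ratio {d k : ℕ} (hk : 0 < k)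
    (f : Fin k → EuclideanSpace ℝ (Fin d) → EuclideanSpace ℝ (Fin d))
    (c : ℝ) (hc : c ∈ Set.Ioo (0 : ℝ) 1)
    (hf : ∀ i, IsSimilarity (f i) c) (hosc : OSC f)
    (K : Set (EuclideanSpace ℝ (Fin d))) (hne : K.Nonempty) (hcpt : IsCompact K)
    (hK : K = ⋃ i, f i '' K) :
    Filter.Tendsto (fun δ : ℝ => Real.log (packingNum K δ) / (-Real.log δ))
      (𝓝[>] (0 : ℝ)) (𝓝 (-Real.log k / Real.log c)) := by
  obtain ⟨V, hVne, hVo, hVb, hVmap, hVdisj⟩ := hosc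
  have hlogc : Real.log c < 0 := Real.log_neg hc.1 hc.2
  have hs : c ^ (-(-Real.log k / Real.log c)) = k := by
    rw [Real.rpow_def_of_pos hc.1, neg_div, neg_neg, mul_div_cancel₀ _ hlogc.ne,
      Real.exp_log (Nat.cast_pos.2 hk)]
  have hs0 : 0 ≤ -Real.log k / Real.log c :=
    div_nonneg_of_nonpos (neg_nonpos.2 (Real.log_natCast_nonneg k)) hlogc.le
  obtain ⟨C₁, C₂, hC₁, hC₂, hbounds⟩ :=
    packingNum_rpow_bounds hc hf hVne hVo hVb hVmap hVdisj hne hcpt hK hs hs0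
  refine tendsto_log_div_neg_log_of_rpow_bounds hC₁ hC₂ ?_
  filter_upwards [Ioc_mem_nhdsGT zero_lt_one] with δ hδ using hbounds δ hδ
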